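/- Let u be a nonprincipal ultrafilter on ℕ and let each (X_n, B_n, μ_n) be an atomless standard Borel probability space (for instance [0,1] with Lebesgue measure). Then in the Loeb measure space (X_u, B_u, μ_u) there exists a family {B_t}_{t∈T} of sets in B_u, indexed by a set T of cardinality the continuum, such that the B_t are mutually independent and each has measure 1/2: for any finitely many distinct indices t_1, …, t_m in T, μ_u(B_{t_1} ∩ … ∩ B_{t_m}) = 2^{−m}. -/

import Mathlib

open MeasureTheory Filter Topology
open scoped ENNReal symmDiff



/-! Ultraproducts of sets and the Loeb outer measure. -/

/-- The equivalence relation on `∀ n, X n` identifying sequences that agree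
`u`-almost everywhere. -/
def uRel (u : Ultrafilter ℕ) {X : ℕ → Type*} (x y : ∀ n, X n) : Prop :=
  ∀ᶠ n in (u : Filter ℕ), x n = y n

/-- The (set-theoretic) ultraproduct of the family `X n` with respect to the
ultrafilter `u`: the quotient of `∀ n, X n` by the relation identifying sequences
which agree `u`-almost everywhere. -/
def UProd (u : Ultrafilter ℕ) (X : ℕ → Type*) : Type _ :=
  Quot (uRel u (X := X))

/-- The class `[x_n]_u` of a sequence in the ultraproduct. -/
def uMk (u : Ultrafilter ℕ) {X : ℕ → Type*} (x : ∀ n, X n) : UProd u X :=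
  Quot.mk _ x

/-- The subset `[A_n]_u` of the ultraproduct determined by a sequence of subsets
`A n ⊆ X n`: the set of classes of sequences which belong to `A n` for `u`-almost
every `n`. -/
def uSet (u : Ultrafilter ℕ) {X : ℕ → Type*} (A : ∀ n, Set (X n)) : Set (UProd u X) :=
  {z | ∃ x : ∀ n, X n, uMk u x = z ∧ ∀ᶠ n in (u : Filter ℕ), x n ∈ A n}

/-- The limit of a sequence of extended nonnegative reals along the ultrafilter `u`
(it always exists since `ℝ≥0∞` is a compact Hausdorff space). -/
noncomputable def ulim (u : Ultrafilter ℕ) (f : ℕ → ℝ≥0∞) : ℝ≥0∞ :=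
  (u.map f).lim

/-- The Loeb outer measure `θ` on the ultraproduct: the infimum, over countable
covers of `A` by sets of the form `[B^i_n]_u` with all `B^i_n` measurable, of
`∑ᵢ lim_u μ_n (B^i_n)`. -/
noncomputable def loebOuter (u : Ultrafilter ℕ) {X : ℕ → Type*}
    [∀ n, MeasurableSpace (X n)] (μ : ∀ n, Measure (X n)) (A : Set (UProd u X)) : ℝ≥0∞ :=
  ⨅ (B : ℕ → ∀ n, Set (X n)) (_ : (∀ i n, MeasurableSet (B i n)) ∧
      A ⊆ ⋃ i, uSet u (B i)), ∑' i, ulim u fun n => μ n (B i n)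

/-- Carathéodory measurability with respect to the Loeb outer measure. -/
def LoebMeasurable (u : Ultrafilter ℕ) {X : ℕ → Type*}
    [∀ n, MeasurableSpace (X n)] (μ : ∀ n, Measure (X n)) (A : Set (UProd u X)) : Prop :=
  ∀ S : Set (UProd u X), loebOuter u μ (S ∩ A) + loebOuter u μ (S \ A) ≤ loebOuter u μ S

/-- The map on the ultraproduct induced by a sequence of maps `g n : X n → X n`. -/
def uMap (u : Ultrafilter ℕ) {X : ℕ → Type*} (g : ∀ n, X n → X n) :
    UProd u X → UProd u X :=
  Quot.lift (fun x => uMk u fun n => g n (x n))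
    (fun x y h => Quot.sound (h.mono fun n hn => by simpa using congrArg (g n) hn))

/-!
For measurable `A n`, the set `[A_n]_u` is Loeb measurable with Loeb measure `lim_u μ_n (A_n)`.
The lower bound is countable saturation: if `[A_n]_u` is covered by countably many `[B^i_n]_u`,
then at `u`-almost every `n` finitely many `B^i_n` already cover `A_n` (diagonalise along the
coordinates; this is where `u` being nonprincipal enters).

In an atomless standard Borel probability space, every measurable set can be halved (embed the
space into `ℝ` and use the intermediate value theorem for the now continuous distribution
function), and iterated halving yields a sequence of independent sets of measure `1/2`. Taking
such a sequence `E n` in each `X n`, indexed by `ℤ`, put `B t := [E n ⌊t 2ⁿ⌋]_u`: finitely many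
distinct reals have distinct dyadic truncations for all large `n`, so `⋂_{t ∈ s} B t` is the
ultraproduct of intersections of `#s` distinct sets of an independent sequence.
-/

section UltraLimit

variable {u : Ultrafilter ℕ} {f g : ℕ → ℝ≥0∞}

theorem tendsto_ulim (u : Ultrafilter ℕ) (f : ℕ → ℝ≥0∞) :
    Tendsto f (u : Filter ℕ) (𝓝 (ulim u f)) := by
  have h := (u.map f).le_nhds_lim
  rwa [Ultrafilter.coe_map] at h

theorem ulim_eq_of_tendsto {a : ℝ≥0∞} (h : Tendsto f (u : Filter ℕ) (𝓝 a)) : ulim u f = a :=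
  tendsto_nhds_unique (tendsto_ulim u f) h

theorem ulim_const (c : ℝ≥0∞) : ulim u (fun _ => c) = c :=
  ulim_eq_of_tendsto tendsto_const_nhds

theorem ulim_congr (h : f =ᶠ[(u : Filter ℕ)] g) : ulim u f = ulim u g :=
  ulim_eq_of_tendsto ((tendsto_ulim u g).congr' h.symm)

theorem ulim_mono (h : f ≤ᶠ[(u : Filter ℕ)] g) : ulim u f ≤ ulim u g :=
  le_of_tendsto_of_tendsto (tendsto_ulim u f) (tendsto_ulim u g) h

theorem ulim_add : ulim u (fun n => f n + g n) = ulim u f + ulim u g :=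
  ulim_eq_of_tendsto ((tendsto_ulim u f).add (tendsto_ulim u g))

theorem ulim_finset_sum {ι : Type*} (s : Finset ι) (F : ι → ℕ → ℝ≥0∞) :
    ulim u (fun n => ∑ i ∈ s, F i n) = ∑ i ∈ s, ulim u (F i) :=
  ulim_eq_of_tendsto (tendsto_finsetSum s fun i _ => tendsto_ulim u (F i))

end UltraLimit

section Ultraproduct

variable {u : Ultrafilter ℕ} {X : ℕ → Type*}

theorem uRel_equivalence (u : Ultrafilter ℕ) : Equivalence (uRel u (X := X)) :=
  ⟨fun _ => .of_forall fun _ => rfl, fun h => h.mono fun _ => Eq.symm,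
    fun h h' => (h.and h').mono fun _ e => e.1.trans e.2⟩

theorem uMk_surjective : Function.Surjective (uMk u (X := X)) :=
  Quot.mk_surjective

theorem uMk_mem_uSet {x : ∀ n, X n} {A : ∀ n, Set (X n)} :
    uMk u x ∈ uSet u A ↔ ∀ᶠ n in (u : Filter ℕ), x n ∈ A n := by
  refine ⟨fun ⟨y, hyx, hy⟩ => ?_, fun h => ⟨x, rfl, h⟩⟩
  have hxy : uRel u y x := (uRel_equivalence u).eqvGen_iff.mp (Quot.eqvGen_exact hyx)
  filter_upwards [hxy, hy] with n e h using e ▸ h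

theorem uSet_inter (A A' : ∀ n, Set (X n)) :
    uSet u A ∩ uSet u A' = uSet u fun n => A n ∩ A' n := by
  ext z
  obtain ⟨x, rfl⟩ := uMk_surjective z
  simp only [Set.mem_inter_iff, uMk_mem_uSet, eventually_and]

theorem uSet_diff (A A' : ∀ n, Set (X n)) :
    uSet u A \ uSet u A' = uSet u fun n => A n \ A' n := by
  ext z
  obtain ⟨x, rfl⟩ := uMk_surjective z
  simp only [Set.mem_sdiff, uMk_mem_uSet, ← Ultrafilter.eventually_not, eventually_and]

theorem uSet_biInter {ι : Type*} (s : Finset ι) (A : ι → ∀ n, Set (X n)) :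
    ⋂ i ∈ s, uSet u (A i) = uSet u fun n => ⋂ i ∈ s, A i n := by
  ext z
  obtain ⟨x, rfl⟩ := uMk_surjective z
  simp only [Set.mem_iInter, uMk_mem_uSet, eventually_all_finset]

theorem exists_eventually_subset_biUnion_of_uSet_subset [∀ n, Nonempty (X n)]
    (hu : (u : Filter ℕ) ≤ cofinite) {A : ∀ n, Set (X n)} {B : ℕ → ∀ n, Set (X n)}
    (hcover : uSet u A ⊆ ⋃ i, uSet u (B i)) :
    ∃ k, ∀ᶠ n in (u : Filter ℕ), A n ⊆ ⋃ i ∈ Finset.range k, B i n := by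
  classical
  by_contra! hbad
  set S : ℕ → Set ℕ := fun k => {n | ¬ A n ⊆ ⋃ i ∈ Finset.range k, B i n}
  have hS : ∀ k, S k ∈ u := hbad
  -- diagonalise: at coordinate `n` avoid the first `depth n` of the `B i n`; `depth → ∞` along `u`
  let depth : ℕ → ℕ := fun n => Nat.findGreatest (fun k => n ∈ S k) n
  have hx : ∀ n, ∃ y : X n,
      n ∈ S (depth n) → y ∈ A n ∧ y ∉ ⋃ i ∈ Finset.range (depth n), B i n := by
    intro n
    by_cases h : n ∈ S (depth n)
    · obtain ⟨y, hyA, hyB⟩ := Set.not_subset.mp h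
      exact ⟨y, fun _ => ⟨hyA, hyB⟩⟩
    · exact ⟨Classical.arbitrary _, fun h' => absurd h' h⟩
  choose x hx using hx
  have hdepth : ∀ n ∈ S 0, n ∈ S (depth n) := fun n hn =>
    Nat.findGreatest_spec (P := fun k => n ∈ S k) (Nat.zero_le n) hn
  have hxA : uMk u x ∈ uSet u A :=
    uMk_mem_uSet.mpr (Filter.mem_of_superset (hS 0) fun n hn => (hx n (hdepth n hn)).1)
  obtain ⟨i, hi⟩ := Set.mem_iUnion.mp (hcover hxA)
  have hlarge : ∀ᶠ n in (u : Filter ℕ), i + 1 ≤ n :=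
    hu (Nat.cofinite_eq_atTop ▸ eventually_ge_atTop (i + 1))
  have hmiss : ∀ᶠ n in (u : Filter ℕ), x n ∉ B i n := by
    filter_upwards [hS 0, hS (i + 1), hlarge] with n h0 hi1 hn
    exact fun hxB => (hx n (hdepth n h0)).2 <| Set.mem_biUnion
      (Finset.mem_range.mpr (Nat.lt_of_succ_le (Nat.le_findGreatest hn hi1))) hxB
  exact ((uMk_mem_uSet.mp hi).and hmiss).exists.elim fun n h => h.2 h.1

end Ultraproduct

section LoebOuter

variable (u : Ultrafilter ℕ) {X : ℕ → Type*} [∀ n, MeasurableSpace (X n)]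
  (μ : ∀ n, Measure (X n))

theorem loebOuter_le_of_subset_iUnion {A : Set (UProd u X)} {B : ℕ → ∀ n, Set (X n)}
    (hB : ∀ i n, MeasurableSet (B i n)) (hA : A ⊆ ⋃ i, uSet u (B i)) :
    loebOuter u μ A ≤ ∑' i, ulim u fun n => μ n (B i n) :=
  iInf₂_le B ⟨hB, hA⟩

theorem loebOuter_uSet_le {A : ∀ n, Set (X n)} (hA : ∀ n, MeasurableSet (A n)) :
    loebOuter u μ (uSet u A) ≤ ulim u fun n => μ n (A n) := by
  classical
  let B : ℕ → ∀ n, Set (X n) := fun i => if i = 0 then A else fun _ => ∅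
  have hB : ∀ i n, MeasurableSet (B i n) := fun i n => by
    by_cases hi : i = 0 <;> simp [B, hi, hA n]
  refine (loebOuter_le_of_subset_iUnion u μ hB (Set.subset_iUnion_of_subset 0 ?_)).trans_eq ?_
  · simp [B]
  · rw [tsum_eq_single 0 fun i hi => by simp [B, hi, ulim_const]]
    simp [B]

theorem ulim_le_tsum_of_uSet_subset_iUnion [∀ n, Nonempty (X n)]
    (hu : (u : Filter ℕ) ≤ cofinite) {A : ∀ n, Set (X n)} {B : ℕ → ∀ n, Set (X n)}
    (hcover : uSet u A ⊆ ⋃ i, uSet u (B i)) :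
    (ulim u fun n => μ n (A n)) ≤ ∑' i, ulim u fun n => μ n (B i n) := by
  obtain ⟨k, hk⟩ := exists_eventually_subset_biUnion_of_uSet_subset hu hcover
  calc (ulim u fun n => μ n (A n))
      ≤ ulim u fun n => ∑ i ∈ Finset.range k, μ n (B i n) :=
        ulim_mono (hk.mono fun n h => (measure_mono h).trans (measure_biUnion_finset_le _ _))
    _ = ∑ i ∈ Finset.range k, ulim u fun n => μ n (B i n) := ulim_finset_sum _ _
    _ ≤ ∑' i, ulim u fun n => μ n (B i n) := ENNReal.sum_le_tsum _

theorem loebOuter_uSet [∀ n, Nonempty (X n)] (hu : (u : Filter ℕ) ≤ cofinite)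
    {A : ∀ n, Set (X n)} (hA : ∀ n, MeasurableSet (A n)) :
    loebOuter u μ (uSet u A) = ulim u fun n => μ n (A n) :=
  (loebOuter_uSet_le u μ hA).antisymm <| le_iInf₂ fun _ hB =>
    ulim_le_tsum_of_uSet_subset_iUnion u μ hu hB.2

theorem loebMeasurable_uSet {A : ∀ n, Set (X n)} (hA : ∀ n, MeasurableSet (A n)) :
    LoebMeasurable u μ (uSet u A) := by
  refine fun S => le_iInf₂ fun B ⟨hB, hS⟩ => ?_
  have hinter : S ∩ uSet u A ⊆ ⋃ i, uSet u fun n => B i n ∩ A n := by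
    simp_rw [← uSet_inter]
    exact Set.inter_subset_inter_left _ hS |>.trans (Set.iUnion_inter _ _).subset
  have hdiff : S \ uSet u A ⊆ ⋃ i, uSet u fun n => B i n \ A n := by
    simp_rw [← uSet_diff]
    exact Set.sdiff_subset_sdiff_left hS |>.trans (Set.iUnion_sdiff _ _).subset
  calc loebOuter u μ (S ∩ uSet u A) + loebOuter u μ (S \ uSet u A)
      ≤ (∑' i, ulim u fun n => μ n (B i n ∩ A n)) +
          ∑' i, ulim u fun n => μ n (B i n \ A n) :=
        add_le_add (loebOuter_le_of_subset_iUnion u μ (fun i n => (hB i n).inter (hA n)) hinter)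
          (loebOuter_le_of_subset_iUnion u μ (fun i n => (hB i n).diff (hA n)) hdiff)
    _ = ∑' i, ulim u fun n => μ n (B i n) := by
        rw [← ENNReal.tsum_add]
        simp_rw [← ulim_add, measure_inter_add_sdiff _ (hA _)]

end LoebOuter

section Halving

open ProbabilityTheory

theorem ProbabilityTheory.continuous_cdf (μ : Measure ℝ) [IsProbabilityMeasure μ]
    [NullSingletonClass μ] : Continuous (cdf μ) := by
  refine continuous_iff_continuousAt.mpr fun a => ?_
  rw [(monotone_cdf μ).continuousAt_iff_leftLim_eq_rightLim, StieltjesFunction.rightLim_eq]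
  have hjump : ENNReal.ofReal (cdf μ a - Function.leftLim (cdf μ) a) = 0 := by
    rw [← StieltjesFunction.measure_singleton, measure_cdf, measure_singleton]
  exact le_antisymm ((monotone_cdf μ).leftLim_le le_rfl)
    (sub_nonpos.mp (ENNReal.ofReal_eq_zero.mp hjump))

theorem exists_measure_Iic_eq (μ : Measure ℝ) [IsProbabilityMeasure μ] [NullSingletonClass μ]
    {c : ℝ} (hc : c ∈ Set.Ioo 0 1) : ∃ r, μ (Set.Iic r) = ENNReal.ofReal c := by
  obtain ⟨r, hr⟩ := mem_range_of_exists_le_of_exists_ge (continuous_cdf μ)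
    (((tendsto_cdf_atBot μ).eventually (gt_mem_nhds hc.1)).exists.imp fun _ => le_of_lt)
    (((tendsto_cdf_atTop μ).eventually (lt_mem_nhds hc.2)).exists.imp fun _ => le_of_lt)
  exact ⟨r, by rw [← ofReal_cdf, hr]⟩

variable {Y : Type*} [MeasurableSpace Y]

theorem exists_subset_measure_eq_half [StandardBorelSpace Y] (ν : Measure Y) [IsFiniteMeasure ν]
    [NullSingletonClass ν] {S : Set Y} (hS : MeasurableSet S) :
    ∃ T ⊆ S, MeasurableSet T ∧ ν T = ν S / 2 := by
  by_cases hS0 : ν S = 0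
  · exact ⟨∅, Set.empty_subset S, .empty, by simp [hS0]⟩
  obtain ⟨f, hf⟩ := exists_measurableEmbedding_real Y
  have := cond_isProbabilityMeasure (μ := ν) hS0
  have := Measure.isProbabilityMeasure_map (μ := ν[|S]) hf.measurable.aemeasurable
  have : NullSingletonClass ((ν[|S]).map f) := ⟨fun r => by
    rw [Measure.map_apply hf.measurable (measurableSet_singleton r)]
    exact cond_absolutelyContinuous
      ((Set.subsingleton_singleton.preimage hf.injective).measure_zero ν)⟩
  obtain ⟨r, hr⟩ := exists_measure_Iic_eq ((ν[|S]).map f) (c := 1 / 2) (by norm_num)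
  rw [Measure.map_apply hf.measurable measurableSet_Iic] at hr
  refine ⟨S ∩ f ⁻¹' Set.Iic r, Set.inter_subset_left,
    hS.inter (hf.measurable measurableSet_Iic), ?_⟩
  rw [← cond_mul_eq_inter hS, hr]
  simp [ENNReal.div_eq_inv_mul]

structure IsHalving (ν : Measure Y) (half : Set Y → Set Y) : Prop where
  subset : ∀ S, half S ⊆ S
  measurableSet : ∀ {S}, MeasurableSet S → MeasurableSet (half S)
  measure_eq : ∀ {S}, MeasurableSet S → ν (half S) = ν S / 2

theorem exists_isHalving [StandardBorelSpace Y] (ν : Measure Y) [IsFiniteMeasure ν]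
    [NullSingletonClass ν] : ∃ half, IsHalving ν half := by
  have h : ∀ S : Set Y, ∃ T ⊆ S, MeasurableSet S → MeasurableSet T ∧ ν T = ν S / 2 := by
    intro S
    by_cases hS : MeasurableSet S
    · exact (exists_subset_measure_eq_half ν hS).imp fun _ ⟨hTS, hT⟩ => ⟨hTS, fun _ => hT⟩
    · exact ⟨∅, Set.empty_subset S, fun h => absurd h hS⟩
  choose half hsub hhalf using h
  exact ⟨half, hsub, fun hS => (hhalf _ hS).1, fun hS => (hhalf _ hS).2⟩

end Halving

section HalvingCell

variable {Y : Type*}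

/-- The cells of the `k`-th partition obtained by `k` rounds of halving. The address of a cell
is read off the digits `i < k` of `b`: digit `i` is `1` (take the half) iff `i ∈ b`. -/
def halvingCell (half : Set Y → Set Y) : ℕ → Finset ℕ → Set Y
  | 0, _ => Set.univ
  | k + 1, b =>
    if k ∈ b then half (halvingCell half k b)
    else halvingCell half k b \ half (halvingCell half k b)

def halvingSet (half : Set Y → Set Y) (k : ℕ) : Set Y :=
  ⋃ b : Finset ℕ, half (halvingCell half k b)

variable {half : Set Y → Set Y}

theorem halvingCell_succ_subset (hsub : ∀ S, half S ⊆ S) (k : ℕ) (b : Finset ℕ) :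
    halvingCell half (k + 1) b ⊆ halvingCell half k b := by
  rw [halvingCell]
  split_ifs
  exacts [hsub _, Set.sdiff_subset]

theorem halvingCell_congr {k : ℕ} {b b' : Finset ℕ} (h : ∀ i < k, i ∈ b ↔ i ∈ b') :
    halvingCell half k b = halvingCell half k b' := by
  induction k with
  | zero => rfl
  | succ k ih =>
    simp only [halvingCell, h k k.lt_succ_self, ih fun i hi => h i (hi.trans k.lt_succ_self)]

theorem halvingCell_eq_of_mem (hsub : ∀ S, half S ⊆ S) {k : ℕ} {b b' : Finset ℕ} {y : Y}
    (hb : y ∈ halvingCell half k b) (hb' : y ∈ halvingCell half k b') :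
    halvingCell half k b = halvingCell half k b' := by
  induction k with
  | zero => rfl
  | succ k ih =>
    have hprev := ih (halvingCell_succ_subset hsub k b hb) (halvingCell_succ_subset hsub k b' hb')
    simp only [halvingCell, hprev] at hb hb' ⊢
    split_ifs at hb hb' ⊢ <;> first | rfl | exact absurd hb hb'.2 | exact absurd hb' hb.2

theorem halvingCell_inter_halvingSet (hsub : ∀ S, half S ⊆ S) (k : ℕ) (b : Finset ℕ) :
    halvingCell half k b ∩ halvingSet half k = halvingCell half (k + 1) (insert k b) := by
  rw [halvingCell, if_pos (Finset.mem_insert_self k b),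
    halvingCell_congr (b := insert k b) (b' := b) fun i hi => by simp [hi.ne]]
  apply Set.Subset.antisymm
  · rintro y ⟨hyC, hy⟩
    obtain ⟨b', hb'⟩ := Set.mem_iUnion.mp hy
    rwa [halvingCell_eq_of_mem hsub hyC (hsub _ hb')]
  · exact Set.subset_inter (hsub _) (Set.subset_iUnion (fun b' => half (halvingCell half k b')) b)

theorem halvingCell_diff_halvingSet (hsub : ∀ S, half S ⊆ S) (k : ℕ) (b : Finset ℕ) :
    halvingCell half k b \ halvingSet half k = halvingCell half (k + 1) (b.erase k) := by
  rw [← Set.sdiff_self_inter, halvingCell_inter_halvingSet hsub, halvingCell, halvingCell,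
    if_pos (Finset.mem_insert_self k b), if_neg (Finset.notMem_erase k b),
    halvingCell_congr (b := insert k b) (b' := b) fun i hi => by simp [hi.ne],
    halvingCell_congr (b := b.erase k) (b' := b) fun i hi => by simp [hi.ne]]

end HalvingCell

section MeasureHalvingCell

variable {Y : Type*} [MeasurableSpace Y] {half : Set Y → Set Y}

theorem measurableSet_halvingCell (hmeas : ∀ {S}, MeasurableSet S → MeasurableSet (half S))
    (k : ℕ) (b : Finset ℕ) : MeasurableSet (halvingCell half k b) := by
  induction k with
  | zero => exact .univ
  | succ k ih =>
    rw [halvingCell]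
    split_ifs
    exacts [hmeas ih, ih.diff (hmeas ih)]

theorem measurableSet_halvingSet (hmeas : ∀ {S}, MeasurableSet S → MeasurableSet (half S))
    (k : ℕ) : MeasurableSet (halvingSet half k) :=
  .iUnion fun b => hmeas (measurableSet_halvingCell hmeas k b)

namespace IsHalving

variable {ν : Measure Y} [IsFiniteMeasure ν]

theorem measure_halvingCell (h : IsHalving ν half) (k : ℕ) (b : Finset ℕ) :
    ν (halvingCell half k b) = ν Set.univ * 2⁻¹ ^ k := by
  induction k with
  | zero => simp [halvingCell]
  | succ k ih =>
    have hC := measurableSet_halvingCell h.measurableSet k b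
    rw [halvingCell]
    split_ifs
    · rw [h.measure_eq hC, ih, pow_succ, ← mul_assoc, div_eq_mul_inv]
    · rw [measure_sdiff (h.subset _) (h.measurableSet hC).nullMeasurableSet (measure_ne_top _ _),
        h.measure_eq hC, ENNReal.sub_half (measure_ne_top _ _), ih, pow_succ, ← mul_assoc,
        div_eq_mul_inv]

/-- Induction on the number of levels from `k` up to the indices in `s`: if `k ∈ s`, intersecting
with `halvingSet k` replaces the cell by its upper half; otherwise the cell splits into its two
halves, which contribute equally. -/
theorem measure_halvingCell_inter_biInter (h : IsHalving ν half) (n : ℕ) :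
    ∀ (k : ℕ) (b s : Finset ℕ), s ⊆ Finset.Ico k (k + n) →
      ν (halvingCell half k b ∩ ⋂ i ∈ s, halvingSet half i) =
        ν Set.univ * 2⁻¹ ^ k * 2⁻¹ ^ s.card := by
  induction n with
  | zero =>
    intro k b s hs
    obtain rfl : s = ∅ := Finset.subset_empty.mp (by simpa using hs)
    simp [h.measure_halvingCell]
  | succ n ih =>
    intro k b s hs
    have hs' : s.erase k ⊆ Finset.Ico (k + 1) (k + 1 + n) := fun i hi => by
      have hik := Finset.ne_of_mem_erase hi
      have := Finset.mem_Ico.mp (hs (Finset.mem_of_mem_erase hi))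
      rw [Finset.mem_Ico]
      omega
    by_cases hk : k ∈ s
    · rw [← Finset.insert_erase hk, Finset.set_biInter_insert, ← Set.inter_assoc,
        halvingCell_inter_halvingSet h.subset, ih _ _ _ hs',
        Finset.card_insert_of_notMem (Finset.notMem_erase k s)]
      ring
    · rw [Finset.erase_eq_of_notMem hk] at hs'
      rw [← measure_inter_add_sdiff _ (measurableSet_halvingSet h.measurableSet k),
        Set.inter_right_comm, halvingCell_inter_halvingSet h.subset, Set.inter_sdiff_right_comm,
        halvingCell_diff_halvingSet h.subset, ih _ _ _ hs', ih _ _ _ hs', ← add_mul, pow_succ,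
        ← mul_assoc, ← div_eq_mul_inv, ENNReal.add_halves]

theorem measure_biInter_halvingSet (h : IsHalving ν half) (s : Finset ℕ) :
    ν (⋂ i ∈ s, halvingSet half i) = ν Set.univ * 2⁻¹ ^ s.card := by
  have hs : s ⊆ Finset.Ico 0 (0 + (s.sup id + 1)) := fun i hi =>
    Finset.mem_Ico.mpr ⟨Nat.zero_le i, by simpa [Nat.lt_succ_iff] using Finset.le_sup (f := id) hi⟩
  simpa [halvingCell] using h.measure_halvingCell_inter_biInter _ 0 ∅ s hs

end IsHalving

theorem exists_measurableSet_measure_biInter_eq {ι : Type*} [Countable ι] [StandardBorelSpace Y]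
    (ν : Measure Y) [IsFiniteMeasure ν] [NullSingletonClass ν] :
    ∃ E : ι → Set Y, (∀ i, MeasurableSet (E i)) ∧
      ∀ s : Finset ι, ν (⋂ i ∈ s, E i) = ν Set.univ * 2⁻¹ ^ s.card := by
  obtain ⟨half, h⟩ := exists_isHalving ν
  obtain ⟨g, hg⟩ := Countable.exists_injective_nat ι
  refine ⟨fun i => halvingSet half (g i), fun i => measurableSet_halvingSet h.measurableSet _,
    fun s => ?_⟩
  rw [← Finset.set_biInter_finset_image, h.measure_biInter_halvingSet,
    Finset.card_image_of_injective s hg]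

end MeasureHalvingCell

theorem eventually_injOn_floor_mul_two_pow (s : Finset ℝ) :
    ∀ᶠ n in atTop, Set.InjOn (fun t : ℝ => ⌊t * 2 ^ n⌋) s := by
  have hpair : ∀ t ∈ s, ∀ t' ∈ s, ∀ᶠ n in atTop, ⌊t * 2 ^ n⌋ = ⌊t' * 2 ^ n⌋ → t = t' := by
    intro t _ t' _
    by_cases htt : t = t'
    · exact .of_forall fun _ _ => htt
    have hgrow : Tendsto (fun n : ℕ => |t - t'| * 2 ^ n) atTop atTop :=
      (tendsto_pow_atTop_atTop_of_one_lt one_lt_two).const_mul_atTop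
        (abs_pos.mpr (sub_ne_zero.mpr htt))
    filter_upwards [hgrow.eventually_gt_atTop 1] with n hn heq
    have hclose := Int.abs_sub_lt_one_of_floor_eq_floor heq
    rw [← sub_mul, abs_mul, abs_of_pos (by positivity : (0 : ℝ) < 2 ^ n)] at hclose
    exact absurd hn hclose.not_gt
  have hall : ∀ᶠ n in atTop, ∀ t ∈ s, ∀ t' ∈ s, ⌊t * 2 ^ n⌋ = ⌊t' * 2 ^ n⌋ → t = t' :=
    (eventually_all_finset s).mpr fun t ht => (eventually_all_finset s).mpr (hpair t ht)
  filter_upwards [hall] with n hn t ht t' ht' using hn t ht t' ht'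

/-- If the `(X n, μ n)` are atomless standard Borel probability spaces,
then the Loeb space carries a continuum-indexed family of mutually independent
measurable sets of measure `1/2`: for any finitely many distinct indices
`t₁, …, t_m` the measure of `B t₁ ∩ … ∩ B t_m` is `2⁻ᵐ`. -/
theorem loeb_independent_family (u : Ultrafilter ℕ) (hu : (u : Filter ℕ) ≤ Filter.cofinite)
    {X : ℕ → Type*} [∀ n, MeasurableSpace (X n)] [∀ n, StandardBorelSpace (X n)]
    (μ : ∀ n, Measure (X n)) [∀ n, IsProbabilityMeasure (μ n)] [∀ n, NullSingletonClass (μ n)] :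
    ∃ B : ℝ → Set (UProd u X),
      (∀ t : ℝ, LoebMeasurable u μ (B t)) ∧
      ∀ s : Finset ℝ, s.Nonempty →
        loebOuter u μ (⋂ t ∈ s, B t) = (1 / 2 : ℝ≥0∞) ^ s.card := by
  have := fun n => nonempty_of_isProbabilityMeasure (μ n)
  choose E hEmeas hE using fun n => exists_measurableSet_measure_biInter_eq (ι := ℤ) (μ n)
  refine ⟨fun t => uSet u fun n => E n ⌊t * 2 ^ n⌋,
    fun t => loebMeasurable_uSet u μ fun n => hEmeas n _, fun s _ => ?_⟩
  have hinj : ∀ᶠ n in (u : Filter ℕ), Set.InjOn (fun t : ℝ => ⌊t * 2 ^ n⌋) s :=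
    hu (Nat.cofinite_eq_atTop ▸ eventually_injOn_floor_mul_two_pow s)
  rw [uSet_biInter, loebOuter_uSet u μ hu fun n => s.measurableSet_biInter fun _ _ => hEmeas n _]
  calc (ulim u fun n => μ n (⋂ t ∈ s, E n ⌊t * 2 ^ n⌋))
      = ulim u fun _ => 2⁻¹ ^ s.card := ulim_congr <| hinj.mono fun n hn => by
        dsimp only
        rw [← Finset.set_biInter_finset_image (f := fun t : ℝ => ⌊t * 2 ^ n⌋), hE,
          measure_univ, one_mul, Finset.card_image_of_injOn hn]
    _ = (1 / 2 : ℝ≥0∞) ^ s.card := by rw [ulim_const, one_div]
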